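/- arXiv:1602.08180 — 2 statements merged into one kernel-verified Lean document; each statement's English description precedes it below -/
import Mathlib

section
/- Let Â, B̂ be smooth positive functions of (x,y) with (B̂_x/Â)_x + (Â_y/B̂)_y = ÂB̂, and let φ satisfy φ_x = Â_y/B̂ + Â cos φ and φ_y = -B̂_x/Â + B̂ sin φ. Let φ_z be a positive function with (log φ_z)_x = -Â sin φ and (log φ_z)_y = B̂ cos φ. Then the 1-form (Â φ_z cos φ) dx + (B̂ φ_z sin φ) dy is closed, so that locally there exists ψ_z with ψ_{zx} = -φ_{zx} cot φ and ψ_{zy} = φ_{zy} tan φ, where φ_{zx} := -Â φ_z sin φ and φ_{zy} := B̂ φ_z cos φ. -/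
open Real

noncomputable def px2 (f : ℝ → ℝ → ℝ) (x y : ℝ) : ℝ := deriv (fun t => f t y) x
noncomputable def py2 (f : ℝ → ℝ → ℝ) (x y : ℝ) : ℝ := deriv (fun t => f x t) y

lemma sliceY (f : ℝ → ℝ → ℝ) (hf : ContDiff ℝ (⊤ : ℕ∞) fun p : ℝ × ℝ => f p.1 p.2)
    (x y : ℝ) : DifferentiableAt ℝ (fun t => f x t) y := by
  have h := (hf.differentiable (by simp)).differentiableAt (x := (x, y))
  exact h.comp y ((differentiableAt_const x).prodMk differentiableAt_id)

lemma sliceX (f : ℝ → ℝ → ℝ) (hf : ContDiff ℝ (⊤ : ℕ∞) fun p : ℝ × ℝ => f p.1 p.2)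
    (x y : ℝ) : DifferentiableAt ℝ (fun t => f t y) x := by
  have h := (hf.differentiable (by simp)).differentiableAt (x := (x, y))
  exact h.comp x (differentiableAt_id.prodMk (differentiableAt_const y) :
    DifferentiableAt ℝ (fun t : ℝ => ((t, y) : ℝ × ℝ)) x)

theorem stmt_6 (A B φ w : ℝ → ℝ → ℝ) (U : Set (ℝ × ℝ)) (hU : IsOpen U)
    (hA : ContDiff ℝ (⊤ : ℕ∞) fun p : ℝ × ℝ => A p.1 p.2)
    (hB : ContDiff ℝ (⊤ : ℕ∞) fun p : ℝ × ℝ => B p.1 p.2)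
    (hφ : ContDiff ℝ (⊤ : ℕ∞) fun p : ℝ × ℝ => φ p.1 p.2)
    (hw : ContDiff ℝ (⊤ : ℕ∞) fun p : ℝ × ℝ => w p.1 p.2)
    (hApos : ∀ x y, (x, y) ∈ U → 0 < A x y)
    (hBpos : ∀ x y, (x, y) ∈ U → 0 < B x y)
    (hwpos : ∀ x y, (x, y) ∈ U → 0 < w x y)
    (hsin : ∀ x y, (x, y) ∈ U → sin (φ x y) ≠ 0)
    (hcos : ∀ x y, (x, y) ∈ U → cos (φ x y) ≠ 0)
    (hK : ∀ x y, (x, y) ∈ U →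
      px2 (fun a b => px2 B a b / A a b) x y
        + py2 (fun a b => py2 A a b / B a b) x y = A x y * B x y)
    (h1 : ∀ x y, (x, y) ∈ U →
      px2 φ x y = py2 A x y / B x y + A x y * cos (φ x y))
    (h2 : ∀ x y, (x, y) ∈ U →
      py2 φ x y = -(px2 B x y / A x y) + B x y * sin (φ x y))
    (h3 : ∀ x y, (x, y) ∈ U →
      px2 (fun a b => Real.log (w a b)) x y = -(A x y * sin (φ x y)))
    (h4 : ∀ x y, (x, y) ∈ U →
      py2 (fun a b => Real.log (w a b)) x y = B x y * cos (φ x y)) :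
    ∀ x y, (x, y) ∈ U →
      py2 (fun a b => A a b * w a b * cos (φ a b)) x y
        = px2 (fun a b => B a b * w a b * sin (φ a b)) x y := by
  intro x y hxy
  have hA0 : A x y ≠ 0 := (hApos x y hxy).ne'
  have hB0 : B x y ≠ 0 := (hBpos x y hxy).ne'
  have hw0 : w x y ≠ 0 := (hwpos x y hxy).ne'
  -- y-direction derivatives
  have hAy : HasDerivAt (fun t => A x t) (py2 A x y) y := (sliceY A hA x y).hasDerivAt
  have hBy : HasDerivAt (fun t => B x t) (py2 B x y) y := (sliceY B hB x y).hasDerivAt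
  have hφy : HasDerivAt (fun t => φ x t) (py2 φ x y) y := (sliceY φ hφ x y).hasDerivAt
  have hwy : HasDerivAt (fun t => w x t) (py2 w x y) y := (sliceY w hw x y).hasDerivAt
  -- x-direction derivatives
  have hAx : HasDerivAt (fun t => A t y) (px2 A x y) x := (sliceX A hA x y).hasDerivAt
  have hBx : HasDerivAt (fun t => B t y) (px2 B x y) x := (sliceX B hB x y).hasDerivAt
  have hφx : HasDerivAt (fun t => φ t y) (px2 φ x y) x := (sliceX φ hφ x y).hasDerivAt
  have hwx : HasDerivAt (fun t => w t y) (px2 w x y) x := (sliceX w hw x y).hasDerivAt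
  -- compute py2 w and px2 w from log conditions
  have hlogy : HasDerivAt (fun t => Real.log (w x t)) (py2 w x y / w x y) y := hwy.log hw0
  have hwyval : py2 w x y = w x y * (B x y * cos (φ x y)) := by
    have e : py2 w x y / w x y = B x y * cos (φ x y) := by
      rw [← h4 x y hxy]; exact (hlogy.deriv).symm ▸ rfl
    field_simp at e; linarith [e]
  have hlogx : HasDerivAt (fun t => Real.log (w t y)) (px2 w x y / w x y) x := hwx.log hw0
  have hwxval : px2 w x y = w x y * (-(A x y * sin (φ x y))) := by
    have e : px2 w x y / w x y = -(A x y * sin (φ x y)) := by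
      rw [← h3 x y hxy]; exact (hlogx.deriv).symm ▸ rfl
    field_simp at e; linarith [e]
  -- full derivatives
  have hLHS : HasDerivAt (fun t => A x t * w x t * cos (φ x t))
      ((py2 A x y * w x y + A x y * py2 w x y) * cos (φ x y)
        + A x y * w x y * (-sin (φ x y) * py2 φ x y)) y :=
    (hAy.mul hwy).mul hφy.cos
  have hRHS : HasDerivAt (fun t => B t y * w t y * sin (φ t y))
      ((px2 B x y * w x y + B x y * px2 w x y) * sin (φ x y)
        + B x y * w x y * (cos (φ x y) * px2 φ x y)) x :=
    (hBx.mul hwx).mul hφx.sin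
  show deriv (fun t => A x t * w x t * cos (φ x t)) y
      = deriv (fun t => B t y * w t y * sin (φ t y)) x
  rw [hLHS.deriv, hRHS.deriv, hwyval, hwxval, h1 x y hxy, h2 x y hxy]
  have hpy : sin (φ x y) ^ 2 + cos (φ x y) ^ 2 = 1 := by
    rw [add_comm]; exact Real.cos_sq_add_sin_sq _
  field_simp
  ring
end

section
/- Let φ, ψ be smooth functions of (x,y,z) with sin φ ≠ 0 and cos φ ≠ 0, satisfying ψ_{xz} = -φ_{xz} cot φ and ψ_{yz} = φ_{yz} tan φ. Then the mixed-derivative identity (ψ_{zx})_y = (ψ_{zy})_x is equivalent to ψ_{zxy} = φ_x φ_{zy} + φ_y φ_{zx}, and the identity (φ_{zx})_y = (φ_{zy})_x is equivalent to φ_{zxy} + φ_x ψ_{zy} + φ_y ψ_{zx} = 0. -/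
open Real

noncomputable def px (f : ℝ → ℝ → ℝ → ℝ) (x y z : ℝ) : ℝ := deriv (fun t => f t y z) x
noncomputable def py (f : ℝ → ℝ → ℝ → ℝ) (x y z : ℝ) : ℝ := deriv (fun t => f x t z) y
noncomputable def pz (f : ℝ → ℝ → ℝ → ℝ) (x y z : ℝ) : ℝ := deriv (fun t => f x y t) z

noncomputable def unc (f : ℝ → ℝ → ℝ → ℝ) : ℝ × ℝ × ℝ → ℝ := fun p => f p.1 p.2.1 p.2.2
noncomputable def dv (f : ℝ → ℝ → ℝ → ℝ) (v : ℝ × ℝ × ℝ) : ℝ → ℝ → ℝ → ℝ :=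
  fun x y z => fderiv ℝ (unc f) (x, y, z) v

lemma unc_dv (f : ℝ → ℝ → ℝ → ℝ) (v : ℝ × ℝ × ℝ) :
    unc (dv f v) = fun p => fderiv ℝ (unc f) p v := rfl

lemma dv_contDiff {f : ℝ → ℝ → ℝ → ℝ} (hf : ContDiff ℝ (⊤ : ℕ∞) (unc f)) (v : ℝ × ℝ × ℝ) :
    ContDiff ℝ (⊤ : ℕ∞) (unc (dv f v)) := by
  rw [unc_dv]
  exact (hf.fderiv_right (by simp)).clm_apply contDiff_const

lemma hasDerivAt_slice_x {f : ℝ → ℝ → ℝ → ℝ} (hf : ContDiff ℝ (⊤ : ℕ∞) (unc f)) (x y z : ℝ) :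
    HasDerivAt (fun t => f t y z) (fderiv ℝ (unc f) (x, y, z) (1, 0, 0)) x := by
  have hL : HasDerivAt (fun t : ℝ => ((t, y, z) : ℝ × ℝ × ℝ)) (1, 0, 0) x :=
    (hasDerivAt_id x).prodMk (hasDerivAt_const _ _)
  exact ((hf.differentiable (by simp) (x, y, z)).hasFDerivAt.comp_hasDerivAt x hL)

lemma hasDerivAt_slice_y {f : ℝ → ℝ → ℝ → ℝ} (hf : ContDiff ℝ (⊤ : ℕ∞) (unc f)) (x y z : ℝ) :
    HasDerivAt (fun t => f x t z) (fderiv ℝ (unc f) (x, y, z) (0, 1, 0)) y := by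
  have hL : HasDerivAt (fun t : ℝ => ((x, t, z) : ℝ × ℝ × ℝ)) (0, 1, 0) y :=
    (hasDerivAt_const _ _).prodMk ((hasDerivAt_id y).prodMk (hasDerivAt_const _ _))
  exact ((hf.differentiable (by simp) (x, y, z)).hasFDerivAt.comp_hasDerivAt y hL)

lemma hasDerivAt_slice_z {f : ℝ → ℝ → ℝ → ℝ} (hf : ContDiff ℝ (⊤ : ℕ∞) (unc f)) (x y z : ℝ) :
    HasDerivAt (fun t => f x y t) (fderiv ℝ (unc f) (x, y, z) (0, 0, 1)) z := by
  have hL : HasDerivAt (fun t : ℝ => ((x, y, t) : ℝ × ℝ × ℝ)) (0, 0, 1) z :=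
    (hasDerivAt_const _ _).prodMk ((hasDerivAt_const _ _).prodMk (hasDerivAt_id z))
  exact ((hf.differentiable (by simp) (x, y, z)).hasFDerivAt.comp_hasDerivAt z hL)

lemma px_eq {f : ℝ → ℝ → ℝ → ℝ} (hf : ContDiff ℝ (⊤ : ℕ∞) (unc f)) : px f = dv f (1, 0, 0) := by
  funext x y z; exact (hasDerivAt_slice_x hf x y z).deriv

lemma py_eq {f : ℝ → ℝ → ℝ → ℝ} (hf : ContDiff ℝ (⊤ : ℕ∞) (unc f)) : py f = dv f (0, 1, 0) := by
  funext x y z; exact (hasDerivAt_slice_y hf x y z).deriv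

lemma pz_eq {f : ℝ → ℝ → ℝ → ℝ} (hf : ContDiff ℝ (⊤ : ℕ∞) (unc f)) : pz f = dv f (0, 0, 1) := by
  funext x y z; exact (hasDerivAt_slice_z hf x y z).deriv

lemma dv_comm {f : ℝ → ℝ → ℝ → ℝ} (hf : ContDiff ℝ (⊤ : ℕ∞) (unc f)) (v w : ℝ × ℝ × ℝ) :
    dv (dv f v) w = dv (dv f w) v := by
  funext x y z
  have hd : DifferentiableAt ℝ (fderiv ℝ (unc f)) (x, y, z) :=
    ((hf.fderiv_right (m := (⊤ : ℕ∞)) (by simp)).differentiable (by simp)) _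
  have key : ∀ u : ℝ × ℝ × ℝ, fderiv ℝ (fun p => fderiv ℝ (unc f) p u) (x, y, z)
      = (fderiv ℝ (fderiv ℝ (unc f)) (x, y, z)).flip u := by
    intro u
    have := fderiv_clm_apply (c := fderiv ℝ (unc f)) (u := fun _ => u) hd
      (differentiableAt_const u)
    simpa using this
  have hsymm : IsSymmSndFDerivAt ℝ (unc f) (x, y, z) :=
    hf.contDiffAt.isSymmSndFDerivAt (by rw [minSmoothness_of_isRCLikeNormedField]; exact WithTop.coe_le_coe.mpr (le_top : (2 : ℕ∞) ≤ ⊤))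
  show fderiv ℝ (unc (dv f v)) (x, y, z) w = fderiv ℝ (unc (dv f w)) (x, y, z) v
  rw [unc_dv, unc_dv, key v, key w]
  simp only [ContinuousLinearMap.flip_apply]
  exact hsymm w v

lemma pz_px_comm {f : ℝ → ℝ → ℝ → ℝ} (hf : ContDiff ℝ (⊤ : ℕ∞) (unc f)) : pz (px f) = px (pz f) := by
  rw [px_eq hf, pz_eq hf, pz_eq (dv_contDiff hf _), px_eq (dv_contDiff hf _), dv_comm hf]

lemma pz_py_comm {f : ℝ → ℝ → ℝ → ℝ} (hf : ContDiff ℝ (⊤ : ℕ∞) (unc f)) : pz (py f) = py (pz f) := by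
  rw [py_eq hf, pz_eq hf, pz_eq (dv_contDiff hf _), py_eq (dv_contDiff hf _), dv_comm hf]

lemma py_px_comm {f : ℝ → ℝ → ℝ → ℝ} (hf : ContDiff ℝ (⊤ : ℕ∞) (unc f)) : py (px f) = px (py f) := by
  rw [px_eq hf, py_eq hf, py_eq (dv_contDiff hf _), px_eq (dv_contDiff hf _), dv_comm hf]

lemma algebra_lemma (s c a b A B C S : ℝ) (hs : s ≠ 0) (hc : c ≠ 0) (hp : s ^ 2 + c ^ 2 = 1)
    (e1 : S = -C * (c / s) + -A * ((-s * b * s - c * (c * b)) / s ^ 2))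
    (e2 : S = C * (s / c) + B * ((c * a * c - s * (-s * a)) / c ^ 2)) :
    S = a * B + b * A ∧ C + a * (B * (s / c)) + b * (-A * (c / s)) = 0 := by
  have E1 : S * s ^ 2 = -(C * c * s) + A * b * (s ^ 2 + c ^ 2) := by
    rw [e1]; field_simp; ring
  have E2 : S * c ^ 2 = C * s * c + B * a * (c ^ 2 + s ^ 2) := by
    rw [e2]; field_simp; ring
  rw [hp] at E1
  rw [show c ^ 2 + s ^ 2 = 1 by linarith] at E2
  have hS : S = a * B + b * A := by linear_combination E1 + E2 - S * hp
  refine ⟨hS, ?_⟩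
  field_simp
  linear_combination E1 - s ^ 2 * hS - A * b * hp

lemma hasDerivAt_px' {f : ℝ → ℝ → ℝ → ℝ} (hf : ContDiff ℝ (⊤ : ℕ∞) (unc f)) (x y z : ℝ) :
    HasDerivAt (fun t => f t y z) (px f x y z) x := by
  have h := hasDerivAt_slice_x hf x y z
  have e : px f x y z = fderiv ℝ (unc f) (x, y, z) (1, 0, 0) := h.deriv
  rw [e]; exact h

lemma hasDerivAt_py' {f : ℝ → ℝ → ℝ → ℝ} (hf : ContDiff ℝ (⊤ : ℕ∞) (unc f)) (x y z : ℝ) :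
    HasDerivAt (fun t => f x t z) (py f x y z) y := by
  have h := hasDerivAt_slice_y hf x y z
  have e : py f x y z = fderiv ℝ (unc f) (x, y, z) (0, 1, 0) := h.deriv
  rw [e]; exact h

theorem stmt_12 (φ ψ : ℝ → ℝ → ℝ → ℝ) (U : Set (ℝ × ℝ × ℝ)) (hU : IsOpen U)
    (hφ : ContDiff ℝ (⊤ : ℕ∞) fun p : ℝ × ℝ × ℝ => φ p.1 p.2.1 p.2.2)
    (hψ : ContDiff ℝ (⊤ : ℕ∞) fun p : ℝ × ℝ × ℝ => ψ p.1 p.2.1 p.2.2)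
    (hsin : ∀ x y z, (x, y, z) ∈ U → sin (φ x y z) ≠ 0)
    (hcos : ∀ x y z, (x, y, z) ∈ U → cos (φ x y z) ≠ 0)
    (h1 : ∀ x y z, (x, y, z) ∈ U →
      pz (px ψ) x y z = -(pz (px φ) x y z) * (cos (φ x y z) / sin (φ x y z)))
    (h2 : ∀ x y z, (x, y, z) ∈ U →
      pz (py ψ) x y z = pz (py φ) x y z * (sin (φ x y z) / cos (φ x y z))) :
    ∀ x y z, (x, y, z) ∈ U →
      ((py (px (pz ψ)) x y z = px (py (pz ψ)) x y z) ↔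
        (py (px (pz ψ)) x y z
          = px φ x y z * py (pz φ) x y z + py φ x y z * px (pz φ) x y z)) ∧
      ((py (px (pz φ)) x y z = px (py (pz φ)) x y z) ↔
        (py (px (pz φ)) x y z
          + px φ x y z * py (pz ψ) x y z + py φ x y z * px (pz ψ) x y z = 0)) := by
  intro x y z hxyz
  have hφu : ContDiff ℝ (⊤ : ℕ∞) (unc φ) := hφ
  have hψu : ContDiff ℝ (⊤ : ℕ∞) (unc ψ) := hψ
  have hpzφ : ContDiff ℝ (⊤ : ℕ∞) (unc (pz φ)) := by rw [pz_eq hφu]; exact dv_contDiff hφu _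
  have hpzψ : ContDiff ℝ (⊤ : ℕ∞) (unc (pz ψ)) := by rw [pz_eq hψu]; exact dv_contDiff hψu _
  have hpxpzφ : ContDiff ℝ (⊤ : ℕ∞) (unc (px (pz φ))) := by
    rw [px_eq hpzφ]; exact dv_contDiff hpzφ _
  have hpypzφ : ContDiff ℝ (⊤ : ℕ∞) (unc (py (pz φ))) := by
    rw [py_eq hpzφ]; exact dv_contDiff hpzφ _
  have symψ3 : py (px (pz ψ)) = px (py (pz ψ)) := py_px_comm hpzψ
  have symφ3 : py (px (pz φ)) = px (py (pz φ)) := py_px_comm hpzφ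
  have cψx : pz (px ψ) = px (pz ψ) := pz_px_comm hψu
  have cψy : pz (py ψ) = py (pz ψ) := pz_py_comm hψu
  have cφx : pz (px φ) = px (pz φ) := pz_px_comm hφu
  have cφy : pz (py φ) = py (pz φ) := pz_py_comm hφu
  -- derivative in y of h1
  have hUy : ∀ᶠ t in nhds y,
      pz (px ψ) x t z = -(pz (px φ) x t z) * (cos (φ x t z) / sin (φ x t z)) := by
    have hcont : Continuous fun t : ℝ => ((x, t, z) : ℝ × ℝ × ℝ) := by fun_prop
    filter_upwards [hcont.continuousAt.preimage_mem_nhds (hU.mem_nhds hxyz)] with t ht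
    exact h1 x t z ht
  have dL : deriv (fun t => pz (px ψ) x t z) y
      = deriv (fun t => -(pz (px φ) x t z) * (cos (φ x t z) / sin (φ x t z))) y :=
    Filter.EventuallyEq.deriv_eq hUy
  have hhy : HasDerivAt (fun t => φ x t z) (py φ x y z) y := hasDerivAt_py' hφu x y z
  have hGy : HasDerivAt (fun t => px (pz φ) x t z) (py (px (pz φ)) x y z) y :=
    hasDerivAt_py' hpxpzφ x y z
  have hRy := (hGy.neg).mul ((hhy.cos).div hhy.sin (hsin x y z hxyz))
  have eqI : py (px (pz ψ)) x y z
      = -(py (px (pz φ)) x y z) * (cos (φ x y z) / sin (φ x y z))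
        + -(px (pz φ) x y z) *
          ((-sin (φ x y z) * py φ x y z * sin (φ x y z)
            - cos (φ x y z) * (cos (φ x y z) * py φ x y z)) / sin (φ x y z) ^ 2) := by
    have e0 : deriv (fun t => pz (px ψ) x t z) y = py (px (pz ψ)) x y z := by
      simp only [cψx]; rfl
    rw [← e0, dL]
    simp only [cφx]
    exact hRy.deriv
  -- derivative in x of h2
  have hUx : ∀ᶠ t in nhds x,
      pz (py ψ) t y z = pz (py φ) t y z * (sin (φ t y z) / cos (φ t y z)) := by
    have hcont : Continuous fun t : ℝ => ((t, y, z) : ℝ × ℝ × ℝ) := by fun_prop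
    filter_upwards [hcont.continuousAt.preimage_mem_nhds (hU.mem_nhds hxyz)] with t ht
    exact h2 t y z ht
  have dLx : deriv (fun t => pz (py ψ) t y z) x
      = deriv (fun t => pz (py φ) t y z * (sin (φ t y z) / cos (φ t y z))) x :=
    Filter.EventuallyEq.deriv_eq hUx
  have hhx : HasDerivAt (fun t => φ t y z) (px φ x y z) x := hasDerivAt_px' hφu x y z
  have hGx : HasDerivAt (fun t => py (pz φ) t y z) (px (py (pz φ)) x y z) x :=
    hasDerivAt_px' hpypzφ x y z
  have hRx := hGx.mul ((hhx.sin).div hhx.cos (hcos x y z hxyz))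
  have eqII : px (py (pz ψ)) x y z
      = px (py (pz φ)) x y z * (sin (φ x y z) / cos (φ x y z))
        + py (pz φ) x y z *
          ((cos (φ x y z) * px φ x y z * cos (φ x y z)
            - sin (φ x y z) * (-sin (φ x y z) * px φ x y z)) / cos (φ x y z) ^ 2) := by
    have e0 : deriv (fun t => pz (py ψ) t y z) x = px (py (pz ψ)) x y z := by
      simp only [cψy]; rfl
    rw [← e0, dLx]
    simp only [cφy]
    exact hRx.deriv
  rw [← symψ3, ← symφ3] at eqII
  obtain ⟨g1, g2⟩ := algebra_lemma (sin (φ x y z)) (cos (φ x y z)) (px φ x y z) (py φ x y z)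
    (px (pz φ) x y z) (py (pz φ) x y z) (py (px (pz φ)) x y z) (py (px (pz ψ)) x y z)
    (hsin x y z hxyz) (hcos x y z hxyz) (sin_sq_add_cos_sq _)
    (by linear_combination eqI) (by linear_combination eqII)
  have vy : py (pz ψ) x y z = py (pz φ) x y z * (sin (φ x y z) / cos (φ x y z)) := by
    rw [← cψy, ← cφy]; exact h2 x y z hxyz
  have vx : px (pz ψ) x y z = -(px (pz φ) x y z) * (cos (φ x y z) / sin (φ x y z)) := by
    rw [← cψx, ← cφx]; exact h1 x y z hxyz
  constructor
  · exact ⟨fun _ => g1, fun _ => congrFun (congrFun (congrFun symψ3 x) y) z⟩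
  · refine ⟨fun _ => ?_, fun _ => congrFun (congrFun (congrFun symφ3 x) y) z⟩
    rw [vy, vx]
    linear_combination g2
end
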